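/- arXiv:0803.0553 — 4 statements merged into one kernel-verified Lean document; each statement's English description precedes it below -/
import Mathlib

section
/- For any K-vector space V and multilinear maps f ∈ C^k(V), g ∈ C^m(V), h ∈ C^p(V), the Gerstenhaber products satisfy the pre-Lie identity: (f • g) • h − f • (g • h) = (−1)^{(m−1)(p−1)} ((f • h) • g − f • (h • g)). -/
/-
Expanding `(f • g) • h` inserts `h` into the argument sequence of `f • g`. Relative to the
slot `i` of `f` occupied by `g`, `h` lands either inside the block of `g` or in another slot
of `f`. The nested terms reassemble, by linearity of `f` in slot `i`, into `f • (g • h)`.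
The remaining terms insert `g` and `h` into two distinct slots of `f`; they are the same for
`(f • h) • g` up to the sign `(-1)^((m-1)(p-1))`, which is the identity.
-/

/-- The extension of a multilinear `k`-cochain on `V` to a function on sequences,
using only the first `k` entries of the sequence. -/
def toCochain {K V : Type*} [Field K] [AddCommGroup V] [Module K V] {k : ℕ}
    (f : MultilinearMap K (fun _ : Fin k => V) V) : (ℕ → V) → V :=
  fun x => f fun j => x j.val

/-- The Gerstenhaber product of a `k`-cochain and an `l`-cochain (cochains are
represented as functions on sequences depending only on the first `k`, resp. `l`, entries;
sequences are `0`-indexed, so the sign `(-1)^{(i-1)(l-1)}` of the paper, `1 ≤ i ≤ k`,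
becomes `(-1)^{i(l-1)}`, `0 ≤ i ≤ k-1`). -/
def gerst {V : Type*} [AddCommGroup V] (k l : ℕ) (f g : (ℕ → V) → V) : (ℕ → V) → V :=
  fun x => ∑ i ∈ Finset.range k, ((-1 : ℤ) ^ (i * (l - 1))) •
    f fun j => if j < i then x j else if j = i then g (fun s => x (i + s)) else x (j + l - 1)

open Finset

def insertAt {V : Type*} (l : ℕ) (A : (ℕ → V) → V) (i : ℕ) (x : ℕ → V) : ℕ → V :=
  fun j => if j < i then x j else if j = i then A (fun s => x (i + s)) else x (j + l - 1)

def DependsOnFirst {V : Type*} (n : ℕ) (F : (ℕ → V) → V) : Prop :=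
  ∀ ⦃x y : ℕ → V⦄, (∀ j < n, x j = y j) → F x = F y

section insertAt

variable {V : Type*} {l m p i j a c : ℕ} {A G H : (ℕ → V) → V} {x : ℕ → V}

theorem insertAt_of_lt (h : j < i) : insertAt l A i x j = x j := if_pos h

theorem insertAt_self : insertAt l A i x i = A fun s => x (i + s) := by
  simp [insertAt]

theorem insertAt_of_gt (h : i < j) : insertAt l A i x j = x (j + l - 1) := by
  simp [insertAt, h.not_gt, h.ne']

theorem insertAt_insertAt_of_lt (hH : DependsOnFirst p H) (hai : a < i) :
    insertAt m G i (insertAt p H a x) = insertAt p H a (insertAt m G (i + p - 1) x) := by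
  funext j
  rcases lt_trichotomy j a with hja | rfl | hja
  · rw [insertAt_of_lt (hja.trans hai), insertAt_of_lt hja, insertAt_of_lt hja,
      insertAt_of_lt (by omega)]
  · rw [insertAt_of_lt hai, insertAt_self, insertAt_self]
    exact hH fun s hs => (insertAt_of_lt (by omega)).symm
  rcases lt_trichotomy j i with hji | rfl | hji
  · rw [insertAt_of_lt hji, insertAt_of_gt hja, insertAt_of_gt hja, insertAt_of_lt (by omega)]
  · rw [insertAt_self, insertAt_of_gt hja, insertAt_self]
    congr 1; funext s; rw [insertAt_of_gt (by omega)]; congr 1; omega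
  · rw [insertAt_of_gt hji, insertAt_of_gt (by omega), insertAt_of_gt hja,
      insertAt_of_gt (by omega)]
    congr 1; omega

theorem insertAt_add_shift :
    (fun s => insertAt l A (i + c) x (i + s)) = insertAt l A c fun s => x (i + s) := by
  funext s
  rcases lt_trichotomy s c with hsc | rfl | hsc
  · rw [insertAt_of_lt (by omega), insertAt_of_lt hsc]
  · simp only [insertAt_self, add_assoc]
  · rw [insertAt_of_gt (by omega), insertAt_of_gt hsc]; congr 1; omega

theorem insertAt_insertAt_add (hc : c < m) (K : (ℕ → V) → V) :
    insertAt m G i (insertAt p H (i + c) x)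
      = Function.update (insertAt (m + p - 1) K i x) i
          (G (insertAt p H c fun s => x (i + s))) := by
  funext j
  rcases lt_trichotomy j i with hji | rfl | hji
  · rw [Function.update_of_ne hji.ne, insertAt_of_lt hji, insertAt_of_lt hji,
      insertAt_of_lt (by omega)]
  · rw [Function.update_self, insertAt_self, insertAt_add_shift]
  · rw [Function.update_of_ne hji.ne', insertAt_of_gt hji, insertAt_of_gt hji,
      insertAt_of_gt (by omega)]
    congr 1; omega

end insertAt

theorem gerst_apply {V : Type*} [AddCommGroup V] (k l : ℕ) (F G : (ℕ → V) → V)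
    (x : ℕ → V) :
    gerst k l F G x = ∑ i ∈ range k, ((-1 : ℤ) ^ (i * (l - 1))) • F (insertAt l G i x) :=
  rfl

section toCochain

variable {K V : Type*} [Field K] [AddCommGroup V] [Module K V] {k m p i : ℕ}

theorem dependsOnFirst_toCochain (f : MultilinearMap K (fun _ : Fin k => V) V) :
    DependsOnFirst k (toCochain f) :=
  fun _ _ hxy => congrArg f (funext fun j => hxy j j.isLt)

theorem toCochain_update (f : MultilinearMap K (fun _ : Fin k => V) V) (hi : i < k)
    (y : ℕ → V) (v : V) :
    toCochain f (Function.update y i v) = f.toLinearMap (fun j : Fin k => y j) ⟨i, hi⟩ v := by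
  rw [MultilinearMap.toLinearMap_apply]
  exact congrArg f (Function.update_comp_eq_of_injective y Fin.val_injective ⟨i, hi⟩ v)

theorem sum_toCochain_insertAt_insertAt_add (hm : 1 ≤ m) (hp : 1 ≤ p)
    (f : MultilinearMap K (fun _ : Fin k => V) V) (G H : (ℕ → V) → V) (x : ℕ → V)
    (hi : i < k) :
    ∑ c ∈ range m, ((-1 : ℤ) ^ ((i + c) * (p - 1) + i * (m - 1))) •
        toCochain f (insertAt m G i (insertAt p H (i + c) x))
      = ((-1 : ℤ) ^ (i * (m + p - 1 - 1))) •
        toCochain f (insertAt (m + p - 1) (gerst m p G H) i x) := by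
  have hterm : ∀ c ∈ range m, ((-1 : ℤ) ^ ((i + c) * (p - 1) + i * (m - 1))) •
        toCochain f (insertAt m G i (insertAt p H (i + c) x))
      = ((-1 : ℤ) ^ (i * (m + p - 1 - 1))) • f.toLinearMap
          (fun j : Fin k => insertAt (m + p - 1) (gerst m p G H) i x j) ⟨i, hi⟩
          (((-1 : ℤ) ^ (c * (p - 1))) • G (insertAt p H c fun s => x (i + s))) := by
    intro c hc
    rw [insertAt_insertAt_add (mem_range.mp hc) (gerst m p G H), toCochain_update f hi,
      map_zsmul, smul_smul, ← pow_add, show m + p - 1 - 1 = (m - 1) + (p - 1) by omega]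
    congr 2
    ring
  rw [sum_congr rfl hterm, ← smul_sum, ← map_sum, ← gerst_apply, ← toCochain_update f hi,
    ← insertAt_self (l := m + p - 1) (A := gerst m p G H) (x := x),
    Function.update_eq_self]

theorem sum_toCochain_insertAt_insertAt (hm : 1 ≤ m) (hp : 1 ≤ p)
    (f : MultilinearMap K (fun _ : Fin k => V) V) {G : (ℕ → V) → V} (hG : DependsOnFirst m G)
    (H : (ℕ → V) → V) (x : ℕ → V) {i : ℕ} (hi : i < k) :
    ∑ a ∈ range (k + m - 1), ((-1 : ℤ) ^ (a * (p - 1) + i * (m - 1))) •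
        toCochain f (insertAt m G i (insertAt p H a x))
      = ((-1 : ℤ) ^ (i * (m + p - 1 - 1))) •
          toCochain f (insertAt (m + p - 1) (gerst m p G H) i x)
        + ∑ a ∈ range i, ((-1 : ℤ) ^ (a * (p - 1) + i * (m - 1))) •
          toCochain f (insertAt m G i (insertAt p H a x))
        + ∑ j ∈ Ico (i + 1) k, ((-1 : ℤ) ^ ((j + m - 1) * (p - 1) + i * (m - 1))) •
          toCochain f (insertAt p H j (insertAt m G i x)) := by
  rw [range_eq_Ico, ← sum_Ico_consecutive _ (Nat.zero_le i) (show i ≤ k + m - 1 by omega),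
    ← sum_Ico_consecutive _ (show i ≤ i + m by omega) (show i + m ≤ k + m - 1 by omega),
    sum_Ico_eq_sum_range _ i, Nat.add_sub_cancel_left,
    sum_toCochain_insertAt_insertAt_add hm hp f G H x hi, ← range_eq_Ico]
  have hlate : ∑ a ∈ Ico (i + m) (k + m - 1), ((-1 : ℤ) ^ (a * (p - 1) + i * (m - 1))) •
        toCochain f (insertAt m G i (insertAt p H a x))
      = ∑ j ∈ Ico (i + 1) k, ((-1 : ℤ) ^ ((j + m - 1) * (p - 1) + i * (m - 1))) •
          toCochain f (insertAt p H j (insertAt m G i x)) := by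
    rw [show i + m = i + 1 + (m - 1) by omega, show k + m - 1 = k + (m - 1) by omega,
      ← sum_Ico_add']
    refine sum_congr rfl fun j hj => ?_
    rw [insertAt_insertAt_of_lt hG (by rw [mem_Ico] at hj; omega), Nat.add_sub_assoc hm]
  rw [hlate]
  abel

theorem gerst_gerst_sub_gerst_gerst_apply (hm : 1 ≤ m) (hp : 1 ≤ p)
    (f : MultilinearMap K (fun _ : Fin k => V) V) {G : (ℕ → V) → V} (hG : DependsOnFirst m G)
    (H : (ℕ → V) → V) (x : ℕ → V) :
    gerst (k + m - 1) p (gerst k m (toCochain f) G) H x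
        - gerst k (m + p - 1) (toCochain f) (gerst m p G H) x
      = ∑ i ∈ range k, ∑ a ∈ range i,
          (((-1 : ℤ) ^ (a * (p - 1) + i * (m - 1))) •
              toCochain f (insertAt m G i (insertAt p H a x))
            + ((-1 : ℤ) ^ ((i + m - 1) * (p - 1) + a * (m - 1))) •
              toCochain f (insertAt p H i (insertAt m G a x))) := by
  have hexpand : ∀ a ∈ range (k + m - 1), ((-1 : ℤ) ^ (a * (p - 1))) •
        gerst k m (toCochain f) G (insertAt p H a x)
      = ∑ i ∈ range k, ((-1 : ℤ) ^ (a * (p - 1) + i * (m - 1))) •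
          toCochain f (insertAt m G i (insertAt p H a x)) := fun a _ => by
    simp only [gerst_apply, smul_sum, smul_smul, ← pow_add]
  rw [gerst_apply (k + m - 1), sum_congr rfl hexpand, sum_comm,
    sum_congr rfl fun i hi => sum_toCochain_insertAt_insertAt hm hp f hG H x (mem_range.mp hi),
    sum_add_distrib, sum_add_distrib, ← gerst_apply, add_assoc, add_sub_cancel_left,
    range_eq_Ico, sum_Ico_Ico_comm']
  simp only [range_eq_Ico, sum_add_distrib]

end toCochain

theorem gerst_preLie_general {K V : Type*} [Field K] [AddCommGroup V] [Module K V]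
    (k m p : ℕ) (hm : 1 ≤ m) (hp : 1 ≤ p)
    (f : MultilinearMap K (fun _ : Fin k => V) V)
    (g : MultilinearMap K (fun _ : Fin m => V) V)
    (h : MultilinearMap K (fun _ : Fin p => V) V) :
    gerst (k + m - 1) p (gerst k m (toCochain f) (toCochain g)) (toCochain h)
      - gerst k (m + p - 1) (toCochain f) (gerst m p (toCochain g) (toCochain h))
    = ((-1 : ℤ) ^ ((m - 1) * (p - 1))) •
        (gerst (k + p - 1) m (gerst k p (toCochain f) (toCochain h)) (toCochain g)
          - gerst k (p + m - 1) (toCochain f) (gerst p m (toCochain h) (toCochain g))) := by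
  funext x
  rw [Pi.sub_apply, Pi.smul_apply, Pi.sub_apply,
    gerst_gerst_sub_gerst_gerst_apply hm hp f (dependsOnFirst_toCochain g) _ x,
    gerst_gerst_sub_gerst_gerst_apply hp hm f (dependsOnFirst_toCochain h) _ x, smul_sum]
  refine sum_congr rfl fun i _ => ?_
  rw [smul_sum]
  refine sum_congr rfl fun a _ => ?_
  rw [smul_add, smul_smul, smul_smul, ← pow_add, ← pow_add, add_comm,
    Nat.add_sub_assoc hm, Nat.add_sub_assoc hp]
  congr 2
  · congr 1
    ring
  · rw [show (m - 1) * (p - 1) + ((i + (p - 1)) * (m - 1) + a * (p - 1))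
      = a * (p - 1) + i * (m - 1) + 2 * ((m - 1) * (p - 1)) by ring,
      pow_add _ _ (2 * _), (even_two_mul _).neg_one_pow, mul_one]

/-- the pre-Lie identity for Gerstenhaber products:
`(f • g) • h − f • (g • h) = (−1)^{(m−1)(p−1)} ((f • h) • g − f • (h • g))`. -/
theorem gerst_preLie {K V : Type*} [Field K] [CharZero K] [AddCommGroup V] [Module K V]
    (k m p : ℕ) (hk : 1 ≤ k) (hm : 1 ≤ m) (hp : 1 ≤ p)
    (f : MultilinearMap K (fun _ : Fin k => V) V)
    (g : MultilinearMap K (fun _ : Fin m => V) V)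
    (h : MultilinearMap K (fun _ : Fin p => V) V) :
    gerst (k + m - 1) p (gerst k m (toCochain f) (toCochain g)) (toCochain h)
      - gerst k (m + p - 1) (toCochain f) (gerst m p (toCochain g) (toCochain h))
    = ((-1 : ℤ) ^ ((m - 1) * (p - 1))) •
        (gerst (k + p - 1) m (gerst k p (toCochain f) (toCochain h)) (toCochain g)
          - gerst k (p + m - 1) (toCochain f) (gerst p m (toCochain h) (toCochain g))) :=
  gerst_preLie_general k m p hm hp f g h
end

section
/- Let (V, μ) be a 3-ary partially associative algebra over a field K of characteristic zero, i.e., μ : V × V × V → V is trilinear and μ(μ(x_1,x_2,x_3),x_4,x_5) + μ(x_1,μ(x_2,x_3,x_4),x_5) + μ(x_1,x_2,μ(x_3,x_4,x_5)) = 0 for all x_i ∈ V. Then μ satisfies the degree-7 relation: for all x_1,…,x_7 ∈ V, μ(μ(x_1,x_2,x_3), μ(x_4,x_5,x_6), x_7) + μ(μ(x_1,x_2,x_3), x_4, μ(x_5,x_6,x_7)) + μ(x_1, μ(x_2,x_3,x_4), μ(x_5,x_6,x_7)) = 0. -/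
/-!
Write `P(x₁,…,x₅)` for the left side of the defining relation. Substituting a product into
the five degree-5 instances `P(μ(x₁,x₂,x₃),x₄,…)`, `P(x₁,x₂,x₃,μ(x₄,x₅,x₆),x₇)`,
`P(x₁,x₂,x₃,x₄,μ(x₅,x₆,x₇))`, `P(x₁,μ(x₂,x₃,x₄),…)`, `P(x₁,x₂,μ(x₃,x₄,x₅),…)` and subtracting
the three instances `μ(P(x₁,…,x₅),x₆,x₇)`, `μ(x₁,P(x₂,…,x₆),x₇)`, `μ(x₁,x₂,P(x₃,…,x₇))` cancels
every degree-7 monomial except the three of the claimed relation, each of which survives twice.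
So twice the relation is a consequence of partial associativity, and `2` is invertible in `K`.
-/

section PartialAssociator

variable {R V : Type*} [CommSemiring R] [AddCommGroup V] [Module R V]

def partialAssociator (μ : V →ₗ[R] V →ₗ[R] V →ₗ[R] V) (x₁ x₂ x₃ x₄ x₅ : V) : V :=
  μ (μ x₁ x₂ x₃) x₄ x₅ + μ x₁ (μ x₂ x₃ x₄) x₅ + μ x₁ x₂ (μ x₃ x₄ x₅)

theorem two_nsmul_degreeSeven_eq_partialAssociator (μ : V →ₗ[R] V →ₗ[R] V →ₗ[R] V)
    (x₁ x₂ x₃ x₄ x₅ x₆ x₇ : V) :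
    2 • (μ (μ x₁ x₂ x₃) (μ x₄ x₅ x₆) x₇ + μ (μ x₁ x₂ x₃) x₄ (μ x₅ x₆ x₇)
        + μ x₁ (μ x₂ x₃ x₄) (μ x₅ x₆ x₇)) =
      partialAssociator μ (μ x₁ x₂ x₃) x₄ x₅ x₆ x₇
        + partialAssociator μ x₁ x₂ x₃ (μ x₄ x₅ x₆) x₇
        + partialAssociator μ x₁ x₂ x₃ x₄ (μ x₅ x₆ x₇)
        + partialAssociator μ x₁ (μ x₂ x₃ x₄) x₅ x₆ x₇
        + partialAssociator μ x₁ x₂ (μ x₃ x₄ x₅) x₆ x₇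
        - μ (partialAssociator μ x₁ x₂ x₃ x₄ x₅) x₆ x₇
        - μ x₁ (partialAssociator μ x₂ x₃ x₄ x₅ x₆) x₇
        - μ x₁ x₂ (partialAssociator μ x₃ x₄ x₅ x₆ x₇) := by
  simp only [partialAssociator, map_add, LinearMap.add_apply]
  abel

end PartialAssociator

/-- a 3-ary partially associative algebra `(V, μ)` satisfies the degree-7
relation `μ(μ(x₁,x₂,x₃), μ(x₄,x₅,x₆), x₇) + μ(μ(x₁,x₂,x₃), x₄, μ(x₅,x₆,x₇))
+ μ(x₁, μ(x₂,x₃,x₄), μ(x₅,x₆,x₇)) = 0`. -/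
theorem degree_seven_relation_one {K V : Type*} [Field K] [CharZero K]
    [AddCommGroup V] [Module K V]
    (μ : V →ₗ[K] V →ₗ[K] V →ₗ[K] V)
    (h : ∀ x1 x2 x3 x4 x5 : V,
      μ (μ x1 x2 x3) x4 x5 + μ x1 (μ x2 x3 x4) x5 + μ x1 x2 (μ x3 x4 x5) = 0) :
    ∀ x1 x2 x3 x4 x5 x6 x7 : V,
      μ (μ x1 x2 x3) (μ x4 x5 x6) x7 + μ (μ x1 x2 x3) x4 (μ x5 x6 x7)
        + μ x1 (μ x2 x3 x4) (μ x5 x6 x7) = 0 := by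
  intro x1 x2 x3 x4 x5 x6 x7
  have hP : ∀ y₁ y₂ y₃ y₄ y₅ : V, partialAssociator μ y₁ y₂ y₃ y₄ y₅ = 0 := h
  have h2 := two_nsmul_degreeSeven_eq_partialAssociator μ x1 x2 x3 x4 x5 x6 x7
  simp only [hP, map_zero, LinearMap.zero_apply, add_zero, sub_zero] at h2
  rw [← Nat.cast_smul_eq_nsmul K] at h2
  exact (smul_eq_zero.mp h2).resolve_left two_ne_zero
end

section
/- Let (V, μ) be a 3-ary partially associative algebra over a field K of characteristic zero. Then μ satisfies the degree-7 relation: for all x_1,…,x_7 ∈ V, μ(μ(μ(x_1,x_2,x_3),x_4,x_5),x_6,x_7) − μ(μ(x_1,x_2,x_3), μ(x_4,x_5,x_6), x_7) + μ(x_1, x_2, μ(x_3, x_4, μ(x_5,x_6,x_7))) − μ(x_1, μ(x_2,x_3,x_4), μ(x_5,x_6,x_7)) = 0. -/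
namespace TernaryPartialAssoc

variable {R V : Type*} [CommSemiring R] [AddCommGroup V] [Module R V]

def partialAssociator (μ : V →ₗ[R] V →ₗ[R] V →ₗ[R] V) (x1 x2 x3 x4 x5 : V) : V :=
  μ (μ x1 x2 x3) x4 x5 + μ x1 (μ x2 x3 x4) x5 + μ x1 x2 (μ x3 x4 x5)

theorem degree_seven_eq_sum_partialAssociator (μ : V →ₗ[R] V →ₗ[R] V →ₗ[R] V)
    (x1 x2 x3 x4 x5 x6 x7 : V) :
    μ (μ (μ x1 x2 x3) x4 x5) x6 x7 - μ (μ x1 x2 x3) (μ x4 x5 x6) x7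
        + μ x1 x2 (μ x3 x4 (μ x5 x6 x7)) - μ x1 (μ x2 x3 x4) (μ x5 x6 x7) =
      μ (partialAssociator μ x1 x2 x3 x4 x5) x6 x7
        + μ x1 (partialAssociator μ x2 x3 x4 x5 x6) x7
        + μ x1 x2 (partialAssociator μ x3 x4 x5 x6 x7)
        - partialAssociator μ x1 (μ x2 x3 x4) x5 x6 x7
        - partialAssociator μ x1 x2 (μ x3 x4 x5) x6 x7
        - partialAssociator μ x1 x2 x3 (μ x4 x5 x6) x7 := by
  simp only [partialAssociator, map_add, LinearMap.add_apply]
  abel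

theorem degree_seven_relation (μ : V →ₗ[R] V →ₗ[R] V →ₗ[R] V)
    (h : ∀ x1 x2 x3 x4 x5 : V, partialAssociator μ x1 x2 x3 x4 x5 = 0)
    (x1 x2 x3 x4 x5 x6 x7 : V) :
    μ (μ (μ x1 x2 x3) x4 x5) x6 x7 - μ (μ x1 x2 x3) (μ x4 x5 x6) x7
        + μ x1 x2 (μ x3 x4 (μ x5 x6 x7)) - μ x1 (μ x2 x3 x4) (μ x5 x6 x7) = 0 := by
  simp [degree_seven_eq_sum_partialAssociator, h]

end TernaryPartialAssoc

theorem degree_seven_relation_two_general {K V : Type*} [Field K]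
    [AddCommGroup V] [Module K V]
    (μ : V →ₗ[K] V →ₗ[K] V →ₗ[K] V)
    (h : ∀ x1 x2 x3 x4 x5 : V,
      μ (μ x1 x2 x3) x4 x5 + μ x1 (μ x2 x3 x4) x5 + μ x1 x2 (μ x3 x4 x5) = 0) :
    ∀ x1 x2 x3 x4 x5 x6 x7 : V,
      μ (μ (μ x1 x2 x3) x4 x5) x6 x7 - μ (μ x1 x2 x3) (μ x4 x5 x6) x7
        + μ x1 x2 (μ x3 x4 (μ x5 x6 x7)) - μ x1 (μ x2 x3 x4) (μ x5 x6 x7) = 0 :=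
  TernaryPartialAssoc.degree_seven_relation μ h

/-- a 3-ary partially associative algebra `(V, μ)` satisfies the degree-7
relation `μ(μ(μ(x₁,x₂,x₃),x₄,x₅),x₆,x₇) − μ(μ(x₁,x₂,x₃), μ(x₄,x₅,x₆), x₇)
+ μ(x₁, x₂, μ(x₃, x₄, μ(x₅,x₆,x₇))) − μ(x₁, μ(x₂,x₃,x₄), μ(x₅,x₆,x₇)) = 0`. -/
theorem degree_seven_relation_two {K V : Type*} [Field K] [CharZero K]
    [AddCommGroup V] [Module K V]
    (μ : V →ₗ[K] V →ₗ[K] V →ₗ[K] V)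
    (h : ∀ x1 x2 x3 x4 x5 : V,
      μ (μ x1 x2 x3) x4 x5 + μ x1 (μ x2 x3 x4) x5 + μ x1 x2 (μ x3 x4 x5) = 0) :
    ∀ x1 x2 x3 x4 x5 x6 x7 : V,
      μ (μ (μ x1 x2 x3) x4 x5) x6 x7 - μ (μ x1 x2 x3) (μ x4 x5 x6) x7
        + μ x1 x2 (μ x3 x4 (μ x5 x6 x7)) - μ x1 (μ x2 x3 x4) (μ x5 x6 x7) = 0 :=
  degree_seven_relation_two_general μ h
end

section
/- Let V be a vector space of finite dimension m ≥ 1 over a field K of characteristic zero. Index by the 12 pairs (i,j) with 1 ≤ i ≤ 3 and i ≤ j ≤ 5 (corresponding to the 12 complete ternary parenthesizations of 7 letters) a direct sum W = ⊕_{(i,j)} W_{(i,j)} of 12 copies of V^{⊗7}; for w ∈ V^{⊗7} write w_{(i,j)} for the copy of w in the summand W_{(i,j)}. Let R_7 ⊆ W be the linear span, over all w ∈ V^{⊗7}, of the eight vectors w_{(1,1)} + w_{(1,4)} + w_{(1,5)}, w_{(1,2)} + w_{(2,2)} + w_{(2,5)}, w_{(1,3)} + w_{(2,3)} + w_{(3,3)},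 w_{(1,4)} + w_{(2,4)} + w_{(3,4)}, w_{(1,5)} + w_{(2,5)} + w_{(3,5)}, w_{(1,1)} + w_{(1,2)} + w_{(1,3)}, w_{(2,2)} + w_{(2,3)} + w_{(2,4)}, and w_{(3,3)} + w_{(3,4)} + w_{(3,5)}. Then dim(W / R_7) = 4 m^7. -/
open scoped TensorProduct

/-- The index set of the 12 complete ternary parenthesizations of 7 letters: pairs `(i, j)`
with `1 ≤ i ≤ 3` and `i ≤ j ≤ 5` recording the positions of the two inner left brackets. -/
def ParenIdx : Type := {ij : ℕ × ℕ // 1 ≤ ij.1 ∧ ij.1 ≤ 3 ∧ ij.1 ≤ ij.2 ∧ ij.2 ≤ 5}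

/-- The copy `w_{(i,j)}` of `w ∈ V^{⊗7}` placed in the summand indexed by `(i, j)` of the
direct sum of 12 copies of `V^{⊗7}`. -/
noncomputable def copyAt {K V : Type*} [Field K] [AddCommGroup V] [Module K V]
    (i j : ℕ) (w : TensorPower K 7 V) : ParenIdx → TensorPower K 7 V :=
  fun idx => if idx.val = (i, j) then w else 0

/-! The relations span the image of `Φ : T⁸ → T¹²` (`T = V^{⊗7}`), `Φ r = ∑ₖ ρₖ (r k)`, where `ρₖ`
places a tensor in the three summands of the `k`-th relation. `Φ` is injective: every summand lies
in exactly two relations, so each coordinate of `Φ r = 0` reads `r a + r b = 0`, and eight of these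
equations chain into `2 • r 5 = 0`. As `2 ≠ 0` in `K`, `dim R₇ = 8 m⁷` and `dim (W / R₇) = 4 m⁷`. -/

open Module Submodule

theorem LinearMap.range_lsum {R M N ι : Type*} [CommSemiring R] [AddCommMonoid M] [Module R M]
    [AddCommMonoid N] [Module R N] [Fintype ι] [DecidableEq ι] (f : ι → M →ₗ[R] N) :
    range (lsum R (fun _ => M) R f) = span R (⋃ i, Set.range (f i)) := by
  apply le_antisymm
  · rintro _ ⟨r, rfl⟩
    simp only [lsum_apply, sum_apply, comp_apply, proj_apply]
    exact sum_mem fun i _ => subset_span (Set.mem_iUnion.2 ⟨i, r i, rfl⟩)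
  · rw [span_le]
    rintro _ ⟨_, ⟨i, rfl⟩, w, rfl⟩
    exact ⟨Pi.single i w, lsum_piSingle R _ R f i w⟩

theorem Module.finrank_tensorPower (R M : Type*) [CommRing R] [StrongRankCondition R]
    [AddCommGroup M] [Module R M] [Module.Free R M] [Module.Finite R M] (n : ℕ) :
    finrank R (TensorPower R n M) = finrank R M ^ n := by
  rw [finrank_eq_card_basis (Basis.piTensorProduct fun _ => Free.chooseBasis R M),
    finrank_eq_card_chooseBasisIndex]
  simp

instance : Fintype ParenIdx :=
  Fintype.subtype ((Finset.Icc 1 3 ×ˢ Finset.Icc 1 5).filter fun ij => ij.1 ≤ ij.2)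
    (by rintro ⟨i, j⟩; simp only [Finset.mem_filter, Finset.mem_product, Finset.mem_Icc]; omega)

def ParenIdx.mk (i j : ℕ) (h : 1 ≤ i ∧ i ≤ 3 ∧ i ≤ j ∧ j ≤ 5) : ParenIdx := ⟨(i, j), h⟩

@[simp]
theorem ParenIdx.val_mk (i j : ℕ) (h : 1 ≤ i ∧ i ≤ 3 ∧ i ≤ j ∧ j ≤ 5) :
    (ParenIdx.mk i j h).val = (i, j) := rfl

theorem card_parenIdx : Fintype.card ParenIdx = 12 := rfl

@[simp]
theorem copyAt_apply {K V : Type*} [Field K] [AddCommGroup V] [Module K V] (i j : ℕ)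
    (w : TensorPower K 7 V) (idx : ParenIdx) :
    copyAt i j w idx = if idx.val = (i, j) then w else 0 := rfl

section Relations

variable (K V : Type*) [Field K] [AddCommGroup V] [Module K V]

noncomputable def copyAtₗ (i j : ℕ) : TensorPower K 7 V →ₗ[K] ParenIdx → TensorPower K 7 V where
  toFun := copyAt i j
  map_add' w w' := by ext idx; by_cases h : idx.val = (i, j) <;> simp [h]
  map_smul' c w := by ext idx; by_cases h : idx.val = (i, j) <;> simp [h]

noncomputable def relator : Fin 8 → TensorPower K 7 V →ₗ[K] ParenIdx → TensorPower K 7 V :=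
  ![copyAtₗ K V 1 1 + copyAtₗ K V 1 4 + copyAtₗ K V 1 5,
    copyAtₗ K V 1 2 + copyAtₗ K V 2 2 + copyAtₗ K V 2 5,
    copyAtₗ K V 1 3 + copyAtₗ K V 2 3 + copyAtₗ K V 3 3,
    copyAtₗ K V 1 4 + copyAtₗ K V 2 4 + copyAtₗ K V 3 4,
    copyAtₗ K V 1 5 + copyAtₗ K V 2 5 + copyAtₗ K V 3 5,
    copyAtₗ K V 1 1 + copyAtₗ K V 1 2 + copyAtₗ K V 1 3,
    copyAtₗ K V 2 2 + copyAtₗ K V 2 3 + copyAtₗ K V 2 4,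
    copyAtₗ K V 3 3 + copyAtₗ K V 3 4 + copyAtₗ K V 3 5]

noncomputable abbrev relationMap :
    (Fin 8 → TensorPower K 7 V) →ₗ[K] ParenIdx → TensorPower K 7 V :=
  LinearMap.lsum K _ K (relator K V)

theorem span_relations_eq_range :
    span K {v : ParenIdx → TensorPower K 7 V | ∃ w : TensorPower K 7 V,
        v = copyAt 1 1 w + copyAt 1 4 w + copyAt 1 5 w ∨
        v = copyAt 1 2 w + copyAt 2 2 w + copyAt 2 5 w ∨
        v = copyAt 1 3 w + copyAt 2 3 w + copyAt 3 3 w ∨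
        v = copyAt 1 4 w + copyAt 2 4 w + copyAt 3 4 w ∨
        v = copyAt 1 5 w + copyAt 2 5 w + copyAt 3 5 w ∨
        v = copyAt 1 1 w + copyAt 1 2 w + copyAt 1 3 w ∨
        v = copyAt 2 2 w + copyAt 2 3 w + copyAt 2 4 w ∨
        v = copyAt 3 3 w + copyAt 3 4 w + copyAt 3 5 w} =
      LinearMap.range (relationMap K V) := by
  rw [LinearMap.range_lsum]
  congr 1
  ext v
  simp [relator, copyAtₗ, Fin.exists_fin_succ, exists_or, eq_comm]

theorem relationMap_injective [NeZero (2 : K)] : Function.Injective (relationMap K V) := by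
  rw [← LinearMap.ker_eq_bot, LinearMap.ker_eq_bot']
  intro r hr
  have coord (i j : ℕ) (h : 1 ≤ i ∧ i ≤ 3 ∧ i ≤ j ∧ j ≤ 5 := by decide) :=
    congrFun hr (ParenIdx.mk i j h)
  have e11 : r 0 + r 5 = 0 := by simpa [relator, copyAtₗ, Fin.sum_univ_eight] using coord 1 1
  have e12 : r 1 + r 5 = 0 := by simpa [relator, copyAtₗ, Fin.sum_univ_eight] using coord 1 2
  have e13 : r 2 + r 5 = 0 := by simpa [relator, copyAtₗ, Fin.sum_univ_eight] using coord 1 3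
  have e14 : r 0 + r 3 = 0 := by simpa [relator, copyAtₗ, Fin.sum_univ_eight] using coord 1 4
  have e15 : r 0 + r 4 = 0 := by simpa [relator, copyAtₗ, Fin.sum_univ_eight] using coord 1 5
  have e22 : r 1 + r 6 = 0 := by simpa [relator, copyAtₗ, Fin.sum_univ_eight] using coord 2 2
  have e24 : r 3 + r 6 = 0 := by simpa [relator, copyAtₗ, Fin.sum_univ_eight] using coord 2 4
  have e33 : r 2 + r 7 = 0 := by simpa [relator, copyAtₗ, Fin.sum_univ_eight] using coord 3 3
  have h5 : r 5 = 0 := by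
    have h : (2 : K) • r 5 = 0 := by
      linear_combination (norm := module) e11 - e14 + e24 - e22 + e12
    exact (smul_eq_zero.1 h).resolve_left two_ne_zero
  rw [h5, add_zero] at e11 e12 e13
  rw [e11, zero_add] at e14 e15
  rw [e12, zero_add] at e22
  rw [e13, zero_add] at e33
  ext k : 1
  fin_cases k <;> assumption

end Relations

theorem finrank_degree_seven_component_general {K V : Type*} [Field K] [CharZero K]
    [AddCommGroup V] [Module K V] [FiniteDimensional K V]
    (m : ℕ) (hm : Module.finrank K V = m) :
    Module.finrank K
      ((ParenIdx → TensorPower K 7 V) ⧸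
        Submodule.span K
          {v : ParenIdx → TensorPower K 7 V | ∃ w : TensorPower K 7 V,
            v = copyAt 1 1 w + copyAt 1 4 w + copyAt 1 5 w ∨
            v = copyAt 1 2 w + copyAt 2 2 w + copyAt 2 5 w ∨
            v = copyAt 1 3 w + copyAt 2 3 w + copyAt 3 3 w ∨
            v = copyAt 1 4 w + copyAt 2 4 w + copyAt 3 4 w ∨
            v = copyAt 1 5 w + copyAt 2 5 w + copyAt 3 5 w ∨
            v = copyAt 1 1 w + copyAt 1 2 w + copyAt 1 3 w ∨
            v = copyAt 2 2 w + copyAt 2 3 w + copyAt 2 4 w ∨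
            v = copyAt 3 3 w + copyAt 3 4 w + copyAt 3 5 w})
      = 4 * m ^ 7 := by
  rw [span_relations_eq_range]
  have h_range := LinearMap.finrank_range_of_inj (relationMap_injective K V)
  have h_total := (LinearMap.range (relationMap K V)).finrank_quotient_add_finrank
  simp only [finrank_pi_fintype, finrank_tensorPower, hm, Finset.sum_const, Finset.card_univ,
    card_parenIdx, Fintype.card_fin, smul_eq_mul] at h_range h_total
  omega

/-- with `W` the direct sum of 12 copies of `V^{⊗7}` indexed by the ternary
parenthesizations of 7 letters and `R₇` the span of the eight families of relations, one has
`dim (W / R₇) = 4 m⁷` where `m = dim V ≥ 1`. -/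
theorem finrank_degree_seven_component {K V : Type*} [Field K] [CharZero K]
    [AddCommGroup V] [Module K V] [FiniteDimensional K V]
    (m : ℕ) (hm : Module.finrank K V = m) (hm1 : 1 ≤ m) :
    Module.finrank K
      ((ParenIdx → TensorPower K 7 V) ⧸
        Submodule.span K
          {v : ParenIdx → TensorPower K 7 V | ∃ w : TensorPower K 7 V,
            v = copyAt 1 1 w + copyAt 1 4 w + copyAt 1 5 w ∨
            v = copyAt 1 2 w + copyAt 2 2 w + copyAt 2 5 w ∨
            v = copyAt 1 3 w + copyAt 2 3 w + copyAt 3 3 w ∨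
            v = copyAt 1 4 w + copyAt 2 4 w + copyAt 3 4 w ∨
            v = copyAt 1 5 w + copyAt 2 5 w + copyAt 3 5 w ∨
            v = copyAt 1 1 w + copyAt 1 2 w + copyAt 1 3 w ∨
            v = copyAt 2 2 w + copyAt 2 3 w + copyAt 2 4 w ∨
            v = copyAt 3 3 w + copyAt 3 4 w + copyAt 3 5 w})
      = 4 * m ^ 7 :=
  finrank_degree_seven_component_general m hm
end
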